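/- At q = 1: P(n−2k+1, d, e, k(n−k+1)) = 2^(n−2k+1) · k·(k+1)···(n−k), for 1 ≤ k ≤ n/2, where d = (n−k, n−k−1, ..., k, 0, 0, ...), e = (k, k+1, ..., n−k, 0, 0, ...), and P is the generating polynomial over S(m). -/

import Mathlib

/-- Elements of `[n] ∪ {1̄,...,n̄}`: `(i, false)` is the unbarred element `i`, and
`(i, true)` is the barred element `ī`. -/
abbrev BarredElt := ℕ × Bool

/-- The recursively defined family `S(n)` of subsets of `[n] ∪ {1̄,...,n̄}`:
`S(0) = {∅}`, `S(1) = {{1},{1̄}}`, and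
`S(n+1) = {X∪{n+1} : X ∈ S(n)} ∪ {X∪{(n+1)-bar} : X ∈ S(n), n ∉ X} ∪ S(n-1)`. -/
def S : ℕ → Finset (Finset BarredElt)
  | 0 => {∅}
  | 1 => {{(1, false)}, {(1, true)}}
  | n + 2 =>
      ((S (n + 1)).image (fun X => insert (n + 2, false) X)) ∪
        (((S (n + 1)).filter (fun X => (n + 1, false) ∉ X)).image
          (fun X => insert (n + 2, true) X)) ∪
        S n

/-- The generating polynomial
`P(n,x,y,z) = Σ_{X ∈ S(n)} (Π_{i ∈ X∩[n]} x_i)·(Π_{ī ∈ X} y_i)·z^((n−|X|)/2)`. -/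
def Pgen {R : Type*} [CommSemiring R] (x y : ℕ → R) (z : R) (n : ℕ) : R :=
  ∑ X ∈ S n,
    (∏ p ∈ X.filter (fun p => p.2 = false), x p.1) *
      (∏ p ∈ X.filter (fun p => p.2 = true), y p.1) * z ^ ((n - X.card) / 2)

-- structural lemma: bounds
lemma S_prop : ∀ (m : ℕ), ∀ X ∈ S m, (∀ p ∈ X, 1 ≤ p.1 ∧ p.1 ≤ m) ∧ X.card ≤ m
  | 0 => by intro X hX; simp [S] at hX; subst hX; simp
  | 1 => by
      intro X hX
      simp [S] at hX
      rcases hX with h | h <;> subst h <;> simp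
  | (m+2) => by
      intro X hX
      simp only [S, Finset.mem_union, Finset.mem_image, Finset.mem_filter] at hX
      rcases hX with (⟨Y, hY, rfl⟩ | ⟨Y, ⟨hY, _⟩, rfl⟩) | hX
      · obtain ⟨hb, hc⟩ := S_prop (m+1) Y hY
        have hnot : (m+2, false) ∉ Y := fun h => by have := (hb _ h).2; simp at this
        constructor
        · intro p hp
          rcases Finset.mem_insert.mp hp with rfl | hp
          · simp
          · have := hb p hp; omega
        · calc (insert (m+2, false) Y).card ≤ Y.card + 1 := Finset.card_insert_le _ _
            _ ≤ m + 2 := by omega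
      · obtain ⟨hb, hc⟩ := S_prop (m+1) Y hY
        constructor
        · intro p hp
          rcases Finset.mem_insert.mp hp with rfl | hp
          · simp
          · have := hb p hp; omega
        · calc (insert (m+2, true) Y).card ≤ Y.card + 1 := Finset.card_insert_le _ _
            _ ≤ m + 2 := by omega
      · obtain ⟨hb, hc⟩ := S_prop m X hX
        exact ⟨fun p hp => by have := hb p hp; omega, by omega⟩

lemma S_not_mem {m : ℕ} {X : Finset BarredElt} (hX : X ∈ S m) {a : ℕ} (b : Bool)
    (ha : m < a) : (a, b) ∉ X := fun h => by
  have := ((S_prop m X hX).1 _ h).2; simp at this; omega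

lemma S_card_le {m : ℕ} {X : Finset BarredElt} (hX : X ∈ S m) : X.card ≤ m :=
  (S_prop m X hX).2

section Struct
variable {R : Type*} [CommSemiring R] (x y : ℕ → R) (z : R)

/-- weight of a set at level m -/
def wt (m : ℕ) (X : Finset BarredElt) : R :=
  (∏ p ∈ X.filter (fun p => p.2 = false), x p.1) *
    (∏ p ∈ X.filter (fun p => p.2 = true), y p.1) * z ^ ((m - X.card) / 2)

lemma Pgen_eq (m : ℕ) : Pgen x y z m = ∑ X ∈ S m, wt x y z m X := rfl

def Qgen (m : ℕ) : R := ∑ X ∈ (S m).filter (fun X => (m, false) ∉ X), wt x y z m X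

lemma wt_insert_false {m : ℕ} {X : Finset BarredElt} (hX : X ∈ S (m+1)) :
    wt x y z (m+2) (insert (m+2, false) X) = x (m+2) * wt x y z (m+1) X := by
  have hnm : (m+2, false) ∉ X := S_not_mem hX _ (by omega)
  unfold wt
  rw [Finset.filter_insert, Finset.filter_insert]
  norm_num
  rw [Finset.prod_insert (fun h => hnm (Finset.mem_of_mem_filter _ h)), Finset.card_insert_of_notMem hnm]
  have : m + 2 - (X.card + 1) = m + 1 - X.card := by omega
  rw [this]; ring

lemma wt_insert_true {m : ℕ} {X : Finset BarredElt} (hX : X ∈ S (m+1)) :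
    wt x y z (m+2) (insert (m+2, true) X) = y (m+2) * wt x y z (m+1) X := by
  have hnm : (m+2, true) ∉ X := S_not_mem hX _ (by omega)
  unfold wt
  rw [Finset.filter_insert, Finset.filter_insert]
  norm_num
  rw [Finset.prod_insert (fun h => hnm (Finset.mem_of_mem_filter _ h)), Finset.card_insert_of_notMem hnm]
  have : m + 2 - (X.card + 1) = m + 1 - X.card := by omega
  rw [this]; ring

lemma wt_lift {m : ℕ} {X : Finset BarredElt} (hX : X ∈ S m) :
    wt x y z (m+2) X = z * wt x y z m X := by
  have hc : X.card ≤ m := S_card_le hX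
  unfold wt
  have : (m + 2 - X.card) / 2 = (m - X.card) / 2 + 1 := by omega
  rw [this, pow_succ]; ring

end Struct

section Split
variable {R : Type*} [CommSemiring R] (x y : ℕ → R) (z : R)

lemma sum_image_insert (s : Finset (Finset BarredElt)) (a : BarredElt)
    (h : ∀ X ∈ s, a ∉ X) (f : Finset BarredElt → R) :
    ∑ Y ∈ s.image (fun X => insert a X), f Y = ∑ X ∈ s, f (insert a X) := by
  apply Finset.sum_image
  intro X hX X' hX' hEq
  have : (insert a X).erase a = (insert a X').erase a := by rw [show insert a X = insert a X' from hEq]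
  rwa [Finset.erase_insert (h X hX), Finset.erase_insert (h X' hX')] at this

lemma splits (m : ℕ) :
    Pgen x y z (m+2) = x (m+2) * Pgen x y z (m+1) + Qgen x y z (m+2) ∧
      Qgen x y z (m+2) = y (m+2) * Qgen x y z (m+1) + z * Pgen x y z m := by
  classical
  set A := (S (m+1)).image (fun X => insert (m+2, false) X) with hAdef
  set B := ((S (m+1)).filter (fun X => (m+1, false) ∉ X)).image
      (fun X => insert (m+2, true) X) with hBdef
  have hS : S (m+2) = A ∪ B ∪ S m := rfl
  -- membership facts
  have hAmem : ∀ Y ∈ A, (m+2, false) ∈ Y := by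
    intro Y hY
    obtain ⟨X, _, rfl⟩ := Finset.mem_image.mp hY
    exact Finset.mem_insert_self _ _
  have hBmem : ∀ Y ∈ B, (m+2, false) ∉ Y := by
    intro Y hY
    obtain ⟨X, hX, rfl⟩ := Finset.mem_image.mp hY
    have hX' := (Finset.mem_filter.mp hX).1
    intro h
    rcases Finset.mem_insert.mp h with h | h
    · simp at h
    · exact S_not_mem hX' _ (by omega) h
  have hCmem : ∀ Y ∈ S m, (m+2, false) ∉ Y ∧ (m+2, true) ∉ Y := by
    intro Y hY
    exact ⟨S_not_mem hY _ (by omega), S_not_mem hY _ (by omega)⟩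
  have hdAB : Disjoint A B := by
    rw [Finset.disjoint_left]
    intro Y hYA hYB
    exact hBmem Y hYB (hAmem Y hYA)
  have hdABC : Disjoint (A ∪ B) (S m) := by
    rw [Finset.disjoint_left]
    intro Y hYAB hYC
    rcases Finset.mem_union.mp hYAB with h | h
    · exact (hCmem Y hYC).1 (hAmem Y h)
    · obtain ⟨X, _, rfl⟩ := Finset.mem_image.mp h
      exact (hCmem _ hYC).2 (Finset.mem_insert_self _ _)
  -- the three partial sums
  have hsumA : ∑ Y ∈ A, wt x y z (m+2) Y = x (m+2) * Pgen x y z (m+1) := by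
    rw [hAdef, sum_image_insert _ _ (fun X hX => S_not_mem hX _ (by omega))]
    rw [Pgen_eq, Finset.mul_sum]
    exact Finset.sum_congr rfl (fun X hX => wt_insert_false x y z hX)
  have hsumB : ∑ Y ∈ B, wt x y z (m+2) Y = y (m+2) * Qgen x y z (m+1) := by
    rw [hBdef, sum_image_insert _ _
      (fun X hX => S_not_mem (Finset.mem_filter.mp hX).1 _ (by omega))]
    rw [Qgen, Finset.mul_sum]
    exact Finset.sum_congr rfl
      (fun X hX => wt_insert_true x y z (Finset.mem_filter.mp hX).1)
  have hsumC : ∑ Y ∈ S m, wt x y z (m+2) Y = z * Pgen x y z m := by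
    rw [Pgen_eq, Finset.mul_sum]
    exact Finset.sum_congr rfl (fun X hX => wt_lift x y z hX)
  -- Qgen (m+2) as sum over B ∪ S m
  have hQ : Qgen x y z (m+2) = ∑ Y ∈ B ∪ S m, wt x y z (m+2) Y := by
    rw [Qgen]
    congr 1
    rw [hS, Finset.filter_union, Finset.filter_union]
    have h1 : A.filter (fun Y => (m+2, false) ∉ Y) = ∅ := by
      rw [Finset.filter_eq_empty_iff]
      intro Y hY
      simp only [not_not]
      exact hAmem Y hY
    have h2 : B.filter (fun Y => (m+2, false) ∉ Y) = B :=
      Finset.filter_true_of_mem hBmem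
    have h3 : (S m).filter (fun Y => (m+2, false) ∉ Y) = S m :=
      Finset.filter_true_of_mem (fun Y hY => (hCmem Y hY).1)
    rw [h1, h2, h3, Finset.empty_union]
  have hdBC : Disjoint B (S m) :=
    hdABC.mono_left (Finset.subset_union_right)
  constructor
  · rw [Pgen_eq, hS, Finset.sum_union hdABC, Finset.sum_union hdAB, hsumA, hQ,
      Finset.sum_union hdBC]
    ring
  · rw [hQ, Finset.sum_union hdBC, hsumB, hsumC]

lemma Pgen_zero : Pgen x y z 0 = 1 := by
  simp [Pgen, S, wt]

lemma Pgen_one : Pgen x y z 1 = x 1 + y 1 := by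
  have hne : ({(1, false)} : Finset BarredElt) ≠ {(1, true)} := by decide
  rw [Pgen_eq]
  show ∑ X ∈ ({{(1, false)}, {(1, true)}} : Finset (Finset BarredElt)), wt x y z 1 X = _
  rw [Finset.sum_pair hne]
  simp [wt, Finset.filter_singleton]

lemma Qgen_one : Qgen x y z 1 = y 1 := by
  have : ((S 1).filter (fun X => (1, false) ∉ X)) = {{(1, true)}} := by decide
  rw [Qgen, this, Finset.sum_singleton]
  simp [wt, Finset.filter_singleton]

lemma P_eq_Q (m : ℕ) : Pgen x y z (m+1) = x (m+1) * Pgen x y z m + Qgen x y z (m+1) := by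
  cases m with
  | zero => rw [Pgen_one, Pgen_zero, Qgen_one, mul_one]
  | succ m => exact (splits x y z m).1

lemma three_term (m : ℕ) :
    Pgen x y z (m+2) + x (m+1) * y (m+2) * Pgen x y z m
      = (x (m+2) + y (m+2)) * Pgen x y z (m+1) + z * Pgen x y z m := by
  rw [(splits x y z m).1, (splits x y z m).2, P_eq_Q x y z m]
  ring

end Split

section Numeric

def Kz (k : ℕ) (j : ℕ) : ℤ := ∏ t ∈ Finset.range j, ((k : ℤ) + t)

def Fz (M : ℕ) (j m : ℕ) : ℤ := ∏ t ∈ Finset.Ico (j+1) (m+1), ((M : ℤ) - t)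

def pz (k M : ℕ) (m : ℕ) : ℤ :=
  ∑ j ∈ Finset.range (m+1), (Nat.choose m j : ℤ) * 2^j * Kz k j * Fz M j m

lemma Fz_top {M : ℕ} {j m : ℕ} (h : j + 1 ≤ m + 1) :
    Fz M j (m+1) = Fz M j m * ((M : ℤ) - (m+1)) := by
  rw [Fz, Fz, Finset.prod_Ico_succ_top h]
  push_cast
  ring

lemma Fz_bot {M : ℕ} {j m : ℕ} (h : j + 1 < m + 2) :
    Fz M j (m+1) = ((M : ℤ) - (j+1)) * Fz M (j+1) (m+1) := by
  rw [Fz, Fz, Finset.prod_eq_prod_Ico_succ_bot h]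
  push_cast
  ring_nf

lemma pz_key (k M m : ℕ) :
    pz k M (m+2) + ((m:ℤ)+1) * ((M:ℤ) - m - 1) * pz k M m
      = ((M:ℤ) + 2*(k:ℤ) - 1) * pz k M (m+1) := by
  -- abbreviations
  set A : ℕ → ℤ := fun j => (Nat.choose (m+2) j : ℤ) * 2^j * Kz k j * Fz M j (m+2) with hA
  set B : ℕ → ℤ := fun j =>
    ((m:ℤ)+1) * ((M:ℤ) - m - 1) * (Nat.choose m j : ℤ) * 2^j * Kz k j * Fz M j m with hB
  set u : ℕ → ℤ := fun j =>
    ((M:ℤ) - 1 - 2*j) * (Nat.choose (m+1) j : ℤ) * 2^j * Kz k j * Fz M j (m+1) with hu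
  set g : ℕ → ℤ := fun j =>
    (Nat.choose (m+1) j : ℤ) * 2^(j+1) * Kz k (j+1) * Fz M j (m+1) with hg
  have hLA : pz k M (m+2) = ∑ j ∈ Finset.range (m+3), A j := rfl
  have hLB : ((m:ℤ)+1) * ((M:ℤ) - m - 1) * pz k M m = ∑ j ∈ Finset.range (m+1), B j := by
    rw [pz, Finset.mul_sum]
    exact Finset.sum_congr rfl (fun j _ => by rw [hB]; ring)
  -- RHS decomposition
  have hR : ((M:ℤ) + 2*(k:ℤ) - 1) * pz k M (m+1)
      = ∑ j ∈ Finset.range (m+2), (u j + g j) := by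
    rw [pz, Finset.mul_sum]
    refine Finset.sum_congr rfl (fun j _ => ?_)
    have hK : Kz k (j+1) = Kz k j * ((k:ℤ) + j) := Finset.prod_range_succ _ _
    simp only [hu, hg]
    rw [hK, pow_succ]
    ring
  -- extend B to range (m+3)
  have hBext : ∑ j ∈ Finset.range (m+1), B j = ∑ j ∈ Finset.range (m+3), B j := by
    apply Finset.sum_subset
    · intro j hj
      simp only [Finset.mem_range] at *
      omega
    · intro j _ hj
      simp only [Finset.mem_range, not_lt] at hj
      have : Nat.choose m j = 0 := Nat.choose_eq_zero_of_lt (by omega)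
      simp [hB, this]
  -- extend u sum
  have hUext : ∑ j ∈ Finset.range (m+2), u j = ∑ j ∈ Finset.range (m+3), u j := by
    have hch : Nat.choose (m+1) (m+2) = 0 := Nat.choose_eq_zero_of_lt (by omega)
    have h0 : u (m+2) = 0 := by simp [hu, hch]
    calc ∑ j ∈ Finset.range (m+2), u j
        = ∑ j ∈ Finset.range (m+2), u j + u (m+2) := by rw [h0, add_zero]
      _ = ∑ j ∈ Finset.range (m+3), u j := (Finset.sum_range_succ u (m+2)).symm
  -- split sums at bottom index
  rw [hLA, hLB, hR, Finset.sum_add_distrib, hUext, hBext,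
    Finset.sum_range_succ' A (m+2), Finset.sum_range_succ' B (m+2),
    Finset.sum_range_succ' u (m+2)]
  have edge0 : A 0 + B 0 = u 0 := by
    have h1 : Fz M 0 (m+1) = Fz M 0 m * ((M : ℤ) - (m+1)) := Fz_top (by omega)
    have h2 : Fz M 0 (m+2) = Fz M 0 m * ((M : ℤ) - (m+1)) * ((M : ℤ) - (m+2)) := by
      rw [Fz_top (by omega : (0:ℕ) + 1 ≤ (m+1) + 1), h1]
      push_cast; ring
    simp only [hA, hB, hu, Nat.choose_zero_right]
    rw [h1, h2]
    push_cast; ring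
  have main : ∀ j ∈ Finset.range (m+2), A (j+1) + B (j+1) = u (j+1) + g j := by
    intro j hj
    simp only [Finset.mem_range] at hj
    by_cases hgen : j + 1 ≤ m
    · -- generic case
      have hFbot : Fz M j (m+1) = ((M : ℤ) - (j+1)) * Fz M (j+1) (m+1) :=
        Fz_bot (j := j) (m := m) (by omega)
      have hF1 : Fz M (j+1) (m+1) = Fz M (j+1) m * ((M : ℤ) - (m+1)) := Fz_top (by omega)
      have hF2 : Fz M (j+1) (m+2) = Fz M (j+1) m * ((M : ℤ) - (m+1)) * ((M : ℤ) - (m+2)) := by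
        rw [Fz_top (by omega : (j+1) + 1 ≤ (m+1) + 1), hF1]
        push_cast; ring
      have hc1 : (Nat.choose (m+2) (j+1) : ℤ)
          = (Nat.choose (m+1) (j+1) : ℤ) + (Nat.choose (m+1) j : ℤ) := by
        have := Nat.choose_succ_succ (m+1) j
        push_cast [this]; ring
      have hc2 : ((m:ℤ)+1) * (Nat.choose m (j+1) : ℤ)
          = ((m:ℤ) - j) * (Nat.choose (m+1) (j+1) : ℤ) := by
        have h1 : (m+1) * Nat.choose m (j+1) = Nat.choose (m+1) (j+2) * (j+2) :=
          Nat.add_one_mul_choose_eq m (j+1)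
        have h2 : Nat.choose (m+1) (j+2) * (j+2) = Nat.choose (m+1) (j+1) * (m+1 - (j+1)) :=
          Nat.choose_succ_right_eq (m+1) (j+1)
        have h3 : ((m - j : ℕ) : ℤ) = (m:ℤ) - j := by omega
        have := h1.trans h2
        have h4 := congrArg (fun t : ℕ => (t : ℤ)) this
        push_cast at h4
        rw [h3] at h4
        linarith [h4]
      have hc3 : (Nat.choose (m+1) (j+1) : ℤ) * ((j:ℤ)+1)
          = (Nat.choose (m+1) j : ℤ) * ((m:ℤ) + 1 - j) := by
        have h2 := Nat.choose_succ_right_eq (m+1) j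
        have h3 : ((m + 1 - j : ℕ) : ℤ) = (m:ℤ) + 1 - j := by
          have : j ≤ m + 1 := by omega
          omega
        have h4 := congrArg (fun t : ℕ => (t : ℤ)) h2
        push_cast at h4
        rw [h3] at h4
        linarith [h4]
      simp only [hA, hB, hu, hg]
      rw [hFbot, hF1, hF2]
      push_cast
      linear_combination (2^(j+1) * Kz k (j+1) * Fz M (j+1) m * ((M:ℤ) - m - 1) *
          ((M:ℤ) - m - 2)) * hc1
        + (2^(j+1) * Kz k (j+1) * Fz M (j+1) m * ((M:ℤ) - m - 1)) * hc2
        + (2^(j+1) * Kz k (j+1) * Fz M (j+1) m * ((M:ℤ) - m - 1)) * hc3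
    · -- j = m or j = m+1
      rcases (by omega : j = m ∨ j = m + 1) with rfl | rfl
      · have hFbot : Fz M j (j+1) = ((M : ℤ) - (j+1)) * Fz M (j+1) (j+1) :=
          Fz_bot (j := j) (m := j) (by omega)
        have hF0 : Fz M (j+1) (j+1) = 1 := by
          rw [Fz]; simp
        have hF2 : Fz M (j+1) (j+2) = (M:ℤ) - (j+2) := by
          rw [Fz_top (by omega : (j+1)+1 ≤ (j+1)+1), hF0]
          push_cast; ring
        have hch : Nat.choose j (j+1) = 0 := Nat.choose_eq_zero_of_lt (by omega)
        simp only [hA, hB, hu, hg, hch, Nat.choose_succ_self_right, Nat.choose_self]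
        rw [hFbot, hF0, hF2]
        push_cast
        ring
      · have hF0 : Fz M (m+2) (m+1) = 1 := by
          rw [Fz]
          rw [Finset.Ico_eq_empty (by omega)]
          simp
        have hF0' : Fz M (m+1) (m+1) = 1 := by
          rw [Fz]; simp
        have hch : Nat.choose (m+1) (m+2) = 0 := Nat.choose_eq_zero_of_lt (by omega)
        have hch2 : Nat.choose m (m+2) = 0 := Nat.choose_eq_zero_of_lt (by omega)
        have hF3 : Fz M (m+2) (m+2) = 1 := by
          rw [Fz]
          rw [Finset.Ico_eq_empty (by omega)]
          simp
        simp only [hA, hB, hu, hg, hch, hch2, Nat.choose_self]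
        rw [hF0', hF3]
        push_cast
        ring
  have hmain : (∑ j ∈ Finset.range (m+2), A (j+1)) + (∑ j ∈ Finset.range (m+2), B (j+1))
      = (∑ j ∈ Finset.range (m+2), u (j+1)) + ∑ j ∈ Finset.range (m+2), g j := by
    rw [← Finset.sum_add_distrib, ← Finset.sum_add_distrib]
    exact Finset.sum_congr rfl main
  linear_combination hmain + edge0

lemma pz_zero (k M : ℕ) : pz k M 0 = 1 := by
  simp [pz, Kz, Fz]

lemma pz_one (k M : ℕ) : pz k M 1 = ((M:ℤ) - 1) + 2 * (k:ℤ) := by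
  rw [pz, Finset.sum_range_succ, Finset.sum_range_one]
  simp [Kz, Fz, Finset.prod_Ico_succ_top]

lemma pz_top (k M : ℕ) : pz k M M = 2^M * Kz k M := by
  rw [pz, Finset.sum_range_succ]
  have h0 : ∀ j ∈ Finset.range M, (Nat.choose M j : ℤ) * 2^j * Kz k j * Fz M j M = 0 := by
    intro j hj
    simp only [Finset.mem_range] at hj
    have : Fz M j M = 0 := by
      rw [Fz]
      apply Finset.prod_eq_zero (i := M)
      · simp only [Finset.mem_Ico]; omega
      · simp
    rw [this, mul_zero]
  rw [Finset.sum_eq_zero h0]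
  have : Fz M M M = 1 := by rw [Fz]; simp
  simp [this]

/-- cast of Pgen from ℕ to ℤ -/
lemma Pgen_cast (x y : ℕ → ℕ) (z : ℕ) (m : ℕ) :
    ((Pgen x y z m : ℕ) : ℤ)
      = Pgen (fun i => ((x i : ℕ) : ℤ)) (fun i => ((y i : ℕ) : ℤ)) ((z : ℕ) : ℤ) m := by
  simp [Pgen]

end Numeric


/-- At `q = 1`: for `1 ≤ k ≤ n/2`,
`P(n−2k+1, d, e, k(n−k+1)) = 2^(n−2k+1)·k·(k+1)···(n−k)`, where
`d = (n−k, n−k−1, ..., k, 0, ...)` and `e = (k, k+1, ..., n−k, 0, ...)`. -/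
theorem Pgen_at_q_one (n k : ℕ) (hk1 : 1 ≤ k) (hk : 2 * k ≤ n) :
    Pgen (fun i => if 1 ≤ i ∧ i ≤ n - 2 * k + 1 then (n - k + 1 - i : ℕ) else 0)
        (fun i => if 1 ≤ i ∧ i ≤ n - 2 * k + 1 then (k + i - 1 : ℕ) else 0)
        (k * (n - k + 1)) (n - 2 * k + 1) =
      2 ^ (n - 2 * k + 1) * ∏ j ∈ Finset.Icc k (n - k), j := by
  set M := n - 2 * k + 1 with hMdef
  set xv : ℕ → ℕ := fun i => if 1 ≤ i ∧ i ≤ M then (n - k + 1 - i : ℕ) else 0 with hxv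
  set yv : ℕ → ℕ := fun i => if 1 ≤ i ∧ i ≤ M then (k + i - 1 : ℕ) else 0 with hyv
  set zv : ℕ := k * (n - k + 1) with hzv
  have hM1 : 1 ≤ M := by omega
  have hxcast : ∀ i, 1 ≤ i → i ≤ M → ((xv i : ℕ) : ℤ) = (M:ℤ) + (k:ℤ) - i := by
    intro i h1 h2
    simp only [hxv]
    rw [if_pos (⟨h1, h2⟩ : 1 ≤ i ∧ i ≤ M)]
    omega
  have hycast : ∀ i, 1 ≤ i → i ≤ M → ((yv i : ℕ) : ℤ) = (k:ℤ) + (i:ℤ) - 1 := by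
    intro i h1 h2
    simp only [hyv]
    rw [if_pos (⟨h1, h2⟩ : 1 ≤ i ∧ i ≤ M)]
    omega
  have hzcast : ((zv : ℕ) : ℤ) = (k:ℤ) * ((M:ℤ) + (k:ℤ)) := by
    have h1 : ((n - k + 1 : ℕ) : ℤ) = (M:ℤ) + (k:ℤ) := by omega
    rw [hzv]
    push_cast [h1]
    ring
  -- main induction
  have main : ∀ m : ℕ, m ≤ M → ((Pgen xv yv zv m : ℕ) : ℤ) = pz k M m := by
    intro m
    induction m using Nat.strong_induction_on with
    | _ m ih =>
      match m with
      | 0 => intro _; rw [Pgen_zero, pz_zero]; norm_num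
      | 1 =>
        intro _
        rw [Pgen_one, pz_one]
        push_cast
        rw [hxcast 1 le_rfl hM1, hycast 1 le_rfl hM1]
        push_cast
        ring
      | (m+2) =>
        intro hm
        have h3 := three_term xv yv zv m
        have h3' := congrArg (fun t : ℕ => (t : ℤ)) h3
        push_cast at h3'
        rw [ih m (by omega) (by omega), ih (m+1) (by omega) (by omega)] at h3'
        rw [hxcast (m+1) (by omega) (by omega), hxcast (m+2) (by omega) (by omega),
          hycast (m+2) (by omega) (by omega), hzcast] at h3'
        have hkey := pz_key k M m
        push_cast at h3' hkey ⊢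
        linear_combination h3' - hkey
  -- conclude
  have hfin := main M le_rfl
  rw [pz_top] at hfin
  have hrhs : ((2 ^ M * ∏ j ∈ Finset.Icc k (n - k), j : ℕ) : ℤ) = 2^M * Kz k M := by
    push_cast
    congr 1
    rw [← Finset.Ico_add_one_right_eq_Icc, Finset.prod_Ico_eq_prod_range]
    have hMcount : n - k + 1 - k = M := by omega
    rw [hMcount, Kz]
    push_cast
    ring_nf
  have := hfin.trans (hrhs.symm)
  exact_mod_cast this
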